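/- arXiv:1906.11539 — 5 statements merged into one kernel-verified Lean document; each statement's English description precedes it below -/
import Mathlib

section
/- In a rooted tree of robots where the root robot (connected to the base station) eventually starts moving and repeatedly traverses its tour, and every non-root robot waits at the meeting point with its parent and starts a full tour traversal (waiting finitely at each child meeting point) each time its parent arrives at that meeting point, no robot waits forever: by induction on tree depth, every robot performs infinitely many tour traversals. -/
/-!
STATEMENT 5: In a rooted tree of robots where the root robot (connected to the base
station) eventually starts moving and repeatedly traverses its tour, and every
non-root robot waits at the meeting point with its parent and starts a full tour
traversal (waiting finitely at each child meeting point) each time its parent arrives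
at that meeting point, no robot waits forever: by induction on tree depth, every robot
performs infinitely many tour traversals.

Model: the finite rooted tree is given by a parent map with depths decreasing towards
the root; `Tset v` is the set of times at which robot `v` starts a full tour
traversal.  The root starts traversals at arbitrarily late times; whenever the parent
of `v` starts a traversal at time `s`, robot `v` starts a traversal at some later time
`s' ≤ s + B v` (finite tour lengths and finite waits at child meeting points).
The conclusion — every robot starts traversals at arbitrarily late times — expresses
that each robot performs infinitely many traversals and never waits forever.
-/
theorem stmt_5
    (n : ℕ) (parent : Fin n → Fin n) (root : Fin n)
    (hroot : parent root = root)
    (dep : Fin n → ℕ) (hdeproot : dep root = 0)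
    (hdep : ∀ v, v ≠ root → dep (parent v) < dep v)
    (Tset : Fin n → Set ℝ)
    (B : Fin n → ℝ)
    (hrootlive : ∀ t : ℝ, ∃ s ∈ Tset root, t < s)
    (hchild : ∀ v, v ≠ root → ∀ s ∈ Tset (parent v),
      ∃ s' ∈ Tset v, s < s' ∧ s' ≤ s + B v) :
    ∀ v, ∀ t : ℝ, ∃ s ∈ Tset v, t < s := by
  have key : ∀ d, ∀ v, dep v = d → ∀ t : ℝ, ∃ s ∈ Tset v, t < s := by
    intro d
    induction d using Nat.strong_induction_on with
    | _ d ih =>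
      intro v hd t
      by_cases hv : v = root
      · subst hv; exact hrootlive t
      · obtain ⟨s, hs, hts⟩ := ih (dep (parent v)) (hd ▸ hdep v hv) (parent v) rfl t
        obtain ⟨s', hs', hss', _⟩ := hchild v hv s hs
        exact ⟨s', hs', hts.trans hss'⟩
  exact fun v => key (dep v) v rfl
end

section
/- Given a tour tree with fixed directions and the schedule in which each non-root robot starts at the meeting point with its parent immediately after meeting it and traverses its tour without intermediate stops, the worst delay of data from a subtree rooted at v, computed recursively as max{min_d (l_v − l_v^d(p_v^start, d)), max over children w of (M_w + time_v(p_v^meet(w), p_v^meet(parent), d_v))}, where d_v is chosen to minimize the latter maximum, equals the minimum worst delay achievable over all direction assignments on that subtree. -/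
/-!
Bellman's principle on a tree: the delay of the subtree at `v` depends monotonically on the
delays of the child subtrees, and the direction `σ v` enters only at `v`. Hence, by
well-founded induction towards the leaves, `opt v ≤ M σ v` for every assignment `σ`, while the
assignment choosing at each vertex a direction that attains the infimum defining `opt v`
achieves `opt`.
-/

section Bellman

variable {ι D α : Type*} [ConditionallyCompleteLinearOrder α] [Finite D]
  {r : ι → ι → Prop} {F : (ι → α) → ι → D → α}

theorem WellFounded.le_of_bellman (hr : WellFounded r)
    (hF : ∀ f g v d, (∀ w, r w v → f w ≤ g w) → F f v d ≤ F g v d)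
    {M : ι → α} {σ : ι → D} (hM : ∀ v, M v = F M v (σ v))
    {opt : ι → α} (hopt : ∀ v, opt v = ⨅ d, F opt v d) (v : ι) :
    opt v ≤ M v :=
  hr.induction v fun v ih => calc
    opt v = ⨅ d, F opt v d := hopt v
    _ ≤ F opt v (σ v) := ciInf_le (Set.finite_range _).bddBelow _
    _ ≤ F M v (σ v) := hF _ _ _ _ ih
    _ = M v := (hM v).symm

theorem WellFounded.eq_ciInf_of_bellman [Nonempty D] (hr : WellFounded r)
    (hF : ∀ f g v d, (∀ w, r w v → f w ≤ g w) → F f v d ≤ F g v d)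
    {M : (ι → D) → ι → α} (hM : ∀ σ v, M σ v = F (M σ) v (σ v))
    {opt : ι → α} (hopt : ∀ v, opt v = ⨅ d, F opt v d) (v : ι) :
    opt v = ⨅ σ, M σ v := by
  have hlower : ∀ σ, opt v ≤ M σ v := fun σ => hr.le_of_bellman hF (hM σ) hopt v
  choose greedy hgreedy using fun v => exists_eq_ciInf_of_finite (f := F opt v)
  have hgreedy_le : ∀ v, M greedy v ≤ opt v := fun v =>
    hr.induction v fun v ih => calc
      M greedy v = F (M greedy) v (greedy v) := hM greedy v
      _ ≤ F opt v (greedy v) := hF _ _ _ _ ih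
      _ = opt v := by rw [hgreedy, hopt]
  exact le_antisymm (le_ciInf hlower)
    (ciInf_le_of_le ⟨opt v, by rintro _ ⟨σ, rfl⟩; exact hlower σ⟩ greedy (hgreedy_le v))

end Bellman

section TourTree

variable {ι D : Type*} [Finite ι] (parent : ι → ι)

theorem wellFounded_child {root : ι} (hroot : parent root = root) {dep : ι → ℕ}
    (hdep : ∀ w, w ≠ root → dep (parent w) < dep w) :
    WellFounded fun w v => parent w = v ∧ w ≠ v := by
  have : IsTrans ι fun w v => dep v < dep w := ⟨fun _ _ _ h₁ h₂ => h₂.trans h₁⟩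
  have : Std.Irrefl fun w v : ι => dep v < dep w := ⟨fun _ => lt_irrefl _⟩
  refine Subrelation.wf ?_ (Finite.wellFounded_of_trans_of_irrefl fun w v => dep v < dep w)
  rintro w v ⟨rfl, hw⟩
  exact hdep w fun h => hw (h ▸ hroot.symm)

/-- The worst delay of the subtree at `v` when the child subtrees have worst delays `f` and
the robot of `v` travels in direction `d`. -/
noncomputable def delayBound (own : ι → ℝ) (t : ι → ι → D → ℝ) (f : ι → ℝ) (v : ι) (d : D) : ℝ :=
  sSup (insert (own v) {x : ℝ | ∃ w, parent w = v ∧ w ≠ v ∧ x = f w + t v w d})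

variable {parent}

theorem bddAbove_delaySet (own : ι → ℝ) (t : ι → ι → D → ℝ) (f : ι → ℝ) (v : ι) (d : D) :
    BddAbove (insert (own v) {x : ℝ | ∃ w, parent w = v ∧ w ≠ v ∧ x = f w + t v w d}) :=
  (((Set.finite_range fun w => f w + t v w d).subset
    (by rintro _ ⟨w, -, -, rfl⟩; exact ⟨w, rfl⟩)).insert _).bddAbove

theorem delayBound_mono (own : ι → ℝ) (t : ι → ι → D → ℝ) {f g : ι → ℝ} (v : ι) (d : D)
    (hfg : ∀ w, parent w = v ∧ w ≠ v → f w ≤ g w) :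
    delayBound parent own t f v d ≤ delayBound parent own t g v d := by
  apply csSup_le (Set.insert_nonempty _ _)
  rintro x (rfl | ⟨w, hw, hwv, rfl⟩)
  · exact le_csSup (bddAbove_delaySet own t g v d) (Set.mem_insert _ _)
  · exact (add_le_add_left (hfg w ⟨hw, hwv⟩) _).trans
      (le_csSup (bddAbove_delaySet own t g v d) (Set.mem_insert_of_mem _ ⟨w, hw, hwv, rfl⟩))

end TourTree

theorem stmt_7_general
    (n : ℕ) (parent : Fin n → Fin n) (root : Fin n)
    (hroot : parent root = root)
    (dep : Fin n → ℕ) (hdep : ∀ w, w ≠ root → dep (parent w) < dep w)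
    (own : Fin n → ℝ)
    (t : Fin n → Fin n → Bool → ℝ)
    (M : (Fin n → Bool) → Fin n → ℝ)
    (hM : ∀ σ v, M σ v = sSup (insert (own v)
      {x : ℝ | ∃ w, parent w = v ∧ w ≠ v ∧ x = M σ w + t v w (σ v)}))
    (opt : Fin n → ℝ)
    (hopt : ∀ v, opt v = ⨅ d : Bool, sSup (insert (own v)
      {x : ℝ | ∃ w, parent w = v ∧ w ≠ v ∧ x = opt w + t v w d})) :
    ∀ v, opt v = ⨅ σ : Fin n → Bool, M σ v :=
  (wellFounded_child parent hroot hdep).eq_ciInf_of_bellman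
    (F := delayBound parent own t) (fun _ _ v d => delayBound_mono own t v d) hM hopt

theorem stmt_7
    (n : ℕ) (parent : Fin n → Fin n) (root : Fin n)
    (hroot : parent root = root)
    (dep : Fin n → ℕ) (hdep : ∀ w, w ≠ root → dep (parent w) < dep w)
    (own : Fin n → ℝ)
    (t : Fin n → Fin n → Bool → ℝ)
    (ht : ∀ v w d, 0 ≤ t v w d)
    (M : (Fin n → Bool) → Fin n → ℝ)
    (hM : ∀ σ v, M σ v = sSup (insert (own v)
      {x : ℝ | ∃ w, parent w = v ∧ w ≠ v ∧ x = M σ w + t v w (σ v)}))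
    (opt : Fin n → ℝ)
    (hopt : ∀ v, opt v = ⨅ d : Bool, sSup (insert (own v)
      {x : ℝ | ∃ w, parent w = v ∧ w ≠ v ∧ x = opt w + t v w d})) :
    ∀ v, opt v = ⨅ σ : Fin n → Bool, M σ v :=
  stmt_7_general n parent root hroot dep hdep own t M hM opt hopt
end

section
/- For the 3SAT-to-d-MDT reduction graph, in any spanning tree achieving worst delay at most 4, both edges [t, x] and [t, x̄] must be in the tree: omitting, say, [t, x] forces data from tour x to route through some variable tour x_j and then x̄ and t, incurring delay at least 2 + 1 + 1 + 1 = 5 > 4. -/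
/-- A clause over `a` Boolean variables: three literals, each a variable index with a
polarity (`true` = the variable appears uncomplemented). -/
abbrev RClause (a : ℕ) := (Fin a × Bool) × (Fin a × Bool) × (Fin a × Bool)

/-- The tours of the d-MDT reduction graph: one per clause, one per variable, and the
three auxiliary tours x, x̄ and t. -/
abbrev RV (a b : ℕ) := Fin b ⊕ (Fin a ⊕ Fin 3)

/-- The tour of clause `i`. -/
def cl {a b : ℕ} (i : Fin b) : RV a b := Sum.inl i
/-- The tour of variable `j`. -/
def vr {a b : ℕ} (j : Fin a) : RV a b := Sum.inr (Sum.inl j)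
/-- The auxiliary tour x. -/
def vX (a b : ℕ) : RV a b := Sum.inr (Sum.inr 0)
/-- The auxiliary tour x̄. -/
def vXb (a b : ℕ) : RV a b := Sum.inr (Sum.inr 1)
/-- The auxiliary tour t, which carries the base station (at coordinate 1). -/
def vT (a b : ℕ) : RV a b := Sum.inr (Sum.inr 2)

/-- Variable `j` occurs (as a literal) in clause `c`. -/
def occursIn {a : ℕ} (j : Fin a) (c : RClause a) : Prop :=
  c.1.1 = j ∨ c.2.1.1 = j ∨ c.2.2.1 = j

/-- Variable `j` occurs uncomplemented in clause `c`. -/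
def occursPos {a : ℕ} (j : Fin a) (c : RClause a) : Prop :=
  c.1 = (j, true) ∨ c.2.1 = (j, true) ∨ c.2.2 = (j, true)

/-- Adjacency (meeting points) of the reduction graph: each clause tour meets the
tours of its three variables; each variable tour meets x and x̄; and t meets both x
and x̄. -/
def adjR {a b : ℕ} (C : Fin b → RClause a) : RV a b → RV a b → Prop
  | Sum.inl i, Sum.inr (Sum.inl j) => occursIn j (C i)
  | Sum.inr (Sum.inl j), Sum.inl i => occursIn j (C i)
  | Sum.inr (Sum.inl _), Sum.inr (Sum.inr k) => k = 0 ∨ k = 1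
  | Sum.inr (Sum.inr k), Sum.inr (Sum.inl _) => k = 0 ∨ k = 1
  | Sum.inr (Sum.inr k), Sum.inr (Sum.inr k') =>
      (k = 2 ∧ (k' = 0 ∨ k' = 1)) ∨ (k' = 2 ∧ (k = 0 ∨ k = 1))
  | _, _ => False

open Classical in
/-- Meeting-point coordinates of the reduction graph.  All tours have length 2.
`posR C v w` is the coordinate on tour `v` of the meeting point with tour `w`:
on a clause tour the three meeting points are spaced 2/3 apart (coordinates 0, 2/3,
4/3); on a variable tour the meeting point with x is at 0 and with x̄ at 1 (distance
1 on each side), and a clause meeting point is co-located with x (coordinate 0) if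
the variable occurs uncomplemented and with x̄ (coordinate 1) otherwise; on x and x̄
the meeting point with t is at 0 and all variable meeting points are at 1; on t the
meeting points with x and x̄ are both at 0 (the base station is at coordinate 1). -/
noncomputable def posR {a b : ℕ} (C : Fin b → RClause a) : RV a b → RV a b → ℝ
  | Sum.inl i, Sum.inr (Sum.inl j) =>
      if (C i).1.1 = j then 0 else if (C i).2.1.1 = j then 2 / 3 else 4 / 3
  | Sum.inr (Sum.inl j), Sum.inl i => if occursPos j (C i) then 0 else 1
  | Sum.inr (Sum.inl _), Sum.inr (Sum.inr k) => if k = 0 then 0 else 1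
  | Sum.inr (Sum.inr k), Sum.inr (Sum.inl _) => if k = 2 then 0 else 1
  | _, _ => 0

/-- Travel time from `p` to `q` on a tour of length 2 in the fixed (counterclockwise)
direction. -/
noncomputable def seg (p q : ℝ) : ℝ := 2 * Int.fract ((q - p) / 2)

/-- The three literals of each clause use pairwise distinct variables. -/
def DistinctVars {a b : ℕ} (C : Fin b → RClause a) : Prop :=
  ∀ i, (C i).1.1 ≠ (C i).2.1.1 ∧ (C i).1.1 ≠ (C i).2.2.1 ∧ (C i).2.1.1 ≠ (C i).2.2.1

/-!
STATEMENT 14: For the 3SAT-to-d-MDT reduction graph, in any spanning tree achieving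
worst delay at most 4, both edges [t, x] and [t, x̄] must be in the tree: omitting,
say, [t, x] forces data from tour x to route through some variable tour x_j and then
x̄ and t, incurring delay at least 2 + 1 + 1 + 1 = 5 > 4.

The spanning tree is rooted at the base-station tour t (so the edge [t, x] is in the
tree iff the parent of x is t).  `g v` is the travel time of the data of tour `v`
after its handover to the parent, and the worst delay of `v`'s data is `2 + g v`
(its own tour of length 2 plus the downstream travel time).
-/
lemma seg_nonneg (p q : ℝ) : 0 ≤ seg p q :=
  mul_nonneg (by norm_num) (Int.fract_nonneg _)

lemma seg_eval (p q : ℝ) (n : ℤ) (r : ℝ) (h : (q - p)/2 = n + r)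
    (h0 : 0 ≤ r) (h1 : r < 1) : seg p q = 2 * r := by
  unfold seg
  rw [h, Int.fract_intCast_add, Int.fract_eq_self.2 ⟨h0, h1⟩]

lemma seg_01 : seg 0 1 = 1 := by
  rw [seg_eval 0 1 0 (1/2) (by norm_num) (by norm_num) (by norm_num)]; norm_num

lemma seg_10 : seg 1 0 = 1 := by
  rw [seg_eval 1 0 (-1) (1/2) (by norm_num) (by norm_num) (by norm_num)]; norm_num

lemma seg_self (p : ℝ) : seg p p = 0 := by
  rw [seg_eval p p 0 0 (by norm_num) (by norm_num) (by norm_num)]; norm_num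

lemma seg_pair (p q : ℝ) (hp : p = 0 ∨ p = 2/3 ∨ p = 4/3) (hq : q = 0 ∨ q = 2/3 ∨ q = 4/3)
    (hne : p ≠ q) : 2/3 ≤ seg p q := by
  rcases hp with rfl|rfl|rfl <;> rcases hq with rfl|rfl|rfl
  · exact absurd rfl hne
  · rw [seg_eval 0 (2/3) 0 (1/3) (by norm_num) (by norm_num) (by norm_num)]; norm_num
  · rw [seg_eval 0 (4/3) 0 (2/3) (by norm_num) (by norm_num) (by norm_num)]; norm_num
  · rw [seg_eval (2/3) 0 (-1) (2/3) (by norm_num) (by norm_num) (by norm_num)]; norm_num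
  · exact absurd rfl hne
  · rw [seg_eval (2/3) (4/3) 0 (1/3) (by norm_num) (by norm_num) (by norm_num)]; norm_num
  · rw [seg_eval (4/3) 0 (-1) (1/3) (by norm_num) (by norm_num) (by norm_num)]; norm_num
  · rw [seg_eval (4/3) (2/3) (-1) (2/3) (by norm_num) (by norm_num) (by norm_num)]; norm_num
  · exact absurd rfl hne

lemma seg_add_le {p q d x : ℝ} (hd : x ≤ d) : x ≤ seg p q + d := by
  linarith [seg_nonneg p q]

lemma no_two_cycle {α : Type*} (parent : α → α) (t u v : α) (hu : parent u = v)
    (hv : parent v = u) (hsp : ∃ k, parent^[k] u = t) (hut : u ≠ t) (hvt : v ≠ t) : False := by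
  obtain ⟨k, hk⟩ := hsp
  have key : ∀ m, parent^[m] u = u ∨ parent^[m] u = v := by
    intro m
    induction m with
    | zero => exact Or.inl rfl
    | succ m ih =>
      rw [Function.iterate_succ_apply']
      rcases ih with h | h <;> rw [h]
      · exact Or.inr hu
      · exact Or.inl hv
  rcases key k with h | h <;> rw [hk] at h
  · exact hut h.symm
  · exact hvt h.symm

lemma clause_cases {a b : ℕ} (C : Fin b → RClause a) (i : Fin b) (j : Fin a)
    (hj : occursIn j (C i)) :
    (posR C (Sum.inl i) (Sum.inr (Sum.inl j)) = 0 ∧ (C i).1.1 = j) ∨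
    (posR C (Sum.inl i) (Sum.inr (Sum.inl j)) = 2/3 ∧ (C i).2.1.1 = j) ∨
    (posR C (Sum.inl i) (Sum.inr (Sum.inl j)) = 4/3 ∧ (C i).2.2.1 = j) := by
  simp only [posR]
  by_cases h1 : (C i).1.1 = j
  · exact Or.inl ⟨by rw [if_pos h1], h1⟩
  by_cases h2 : (C i).2.1.1 = j
  · exact Or.inr (Or.inl ⟨by rw [if_neg h1, if_pos h2], h2⟩)
  · exact Or.inr (Or.inr ⟨by rw [if_neg h1, if_neg h2], (hj.resolve_left h1).resolve_left h2⟩)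

lemma seg_clause {a b : ℕ} (C : Fin b → RClause a) (i : Fin b) (j j' : Fin a)
    (hj : occursIn j (C i)) (hj' : occursIn j' (C i)) (hne : j ≠ j') :
    2/3 ≤ seg (posR C (Sum.inl i) (Sum.inr (Sum.inl j)))
      (posR C (Sum.inl i) (Sum.inr (Sum.inl j'))) := by
  apply seg_pair
  · rcases clause_cases C i j hj with ⟨e,-⟩|⟨e,-⟩|⟨e,-⟩ <;> rw [e] <;> tauto
  · rcases clause_cases C i j' hj' with ⟨e,-⟩|⟨e,-⟩|⟨e,-⟩ <;> rw [e] <;> tauto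
  · rcases clause_cases C i j hj with ⟨e,f⟩|⟨e,f⟩|⟨e,f⟩ <;>
      rcases clause_cases C i j' hj' with ⟨e',f'⟩|⟨e',f'⟩|⟨e',f'⟩ <;> rw [e, e'] <;>
      first
        | exact fun _ => hne (f.symm.trans f')
        | norm_num

lemma g_lb {a b : ℕ} (C : Fin b → RClause a) (parent : RV a b → RV a b) (g : RV a b → ℝ)
    (hadj : ∀ v, v ≠ vT a b → adjR C v (parent v))
    (hgroot : g (vT a b) = 0)
    (hg : ∀ v, v ≠ vT a b → g v =
      seg (posR C (parent v) v)
        (if parent v = vT a b then 1 else posR C (parent v) (parent (parent v)))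
        + g (parent v)) :
    ∀ k (v : RV a b), parent^[k] v = vT a b →
      (∀ j, v = Sum.inr (Sum.inl j) → 2 ≤ g v) ∧
      (∀ i, v = Sum.inl i → 2 ≤ g v) ∧
      (v ≠ vT a b → 1 ≤ g v) ∧
      (∀ k3 : Fin 3, k3 ≠ 2 → v = Sum.inr (Sum.inr k3) → parent v ≠ vT a b → 2 ≤ g v) := by
  intro k
  induction k with
  | zero =>
    intro v hv
    simp only [Function.iterate_zero, id_eq] at hv
    subst hv
    refine ⟨?_, ?_, fun h => absurd rfl h, ?_⟩
    · intro j hj; simp [vT] at hj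
    · intro i hi; simp [vT] at hi
    · intro k3 hk3 hv
      simp only [vT, Sum.inr.injEq] at hv
      exact absurd hv.symm hk3
  | succ k ih =>
    intro v hv
    by_cases hvt : v = vT a b
    · subst hvt
      refine ⟨?_, ?_, fun h => absurd rfl h, ?_⟩
      · intro j hj; simp [vT] at hj
      · intro i hi; simp [vT] at hi
      · intro k3 hk3 hv
        simp only [vT, Sum.inr.injEq] at hv
        exact absurd hv.symm hk3
    · rw [Function.iterate_succ_apply] at hv
      have hP := ih (parent v) hv
      have hA := hadj v hvt
      have hgv := hg v hvt
      rcases v with i | j | k3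
      · -- clause vertex
        have main : 2 ≤ g (Sum.inl i : RV a b) := by
          rcases hq : parent (Sum.inl i : RV a b) with i' | j' | k3' <;> rw [hq] at hA hgv hP
          · simp [adjR] at hA
          · rw [hgv]; exact seg_add_le (hP.1 j' rfl)
          · simp [adjR] at hA
        refine ⟨?_, fun _ _ => main, fun _ => by linarith, ?_⟩
        · intro j hj; simp at hj
        · intro k3 _ hv; simp at hv
      · -- variable vertex
        have main : 2 ≤ g (Sum.inr (Sum.inl j) : RV a b) := by
          rcases hq : parent (Sum.inr (Sum.inl j) : RV a b) with i' | j' | k3' <;>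
            rw [hq] at hA hgv hP
          · -- parent is a clause
            rw [hgv]; exact seg_add_le (hP.2.1 i' rfl)
          · simp [adjR] at hA
          · -- parent is x or x̄
            simp only [adjR] at hA
            have hk32 : k3' ≠ 2 := by rcases hA with rfl | rfl <;> decide
            have hpos1 : posR C (Sum.inr (Sum.inr k3') : RV a b) (Sum.inr (Sum.inl j)) = 1 := by
              simp only [posR]; rw [if_neg hk32]
            have hne : (Sum.inr (Sum.inr k3') : RV a b) ≠ vT a b := by
              simp only [vT, ne_eq, Sum.inr.injEq]; exact hk32
            rw [if_neg hne, hpos1] at hgv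
            by_cases hxt : parent (Sum.inr (Sum.inr k3') : RV a b) = vT a b
            · rw [hxt] at hgv
              have hpos0 : posR C (Sum.inr (Sum.inr k3') : RV a b) (vT a b) = 0 := by
                simp [posR, vT]
              rw [hpos0, seg_10] at hgv
              have h1 := hP.2.2.1 hne
              linarith
            · rw [hgv]; exact seg_add_le (hP.2.2.2 k3' hk32 rfl hxt)
        refine ⟨fun _ _ => main, ?_, fun _ => by linarith, ?_⟩
        · intro i hi; simp at hi
        · intro k3 _ hv; simp at hv
      · -- x, x̄ or t
        have hk3 : k3 ≠ 2 := fun h => hvt (by rw [h]; rfl)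
        have main3 : 1 ≤ g (Sum.inr (Sum.inr k3) : RV a b) ∧
            (parent (Sum.inr (Sum.inr k3) : RV a b) ≠ vT a b →
              2 ≤ g (Sum.inr (Sum.inr k3) : RV a b)) := by
          rcases hq : parent (Sum.inr (Sum.inr k3) : RV a b) with i' | j' | k3' <;>
            rw [hq] at hA hgv hP
          · simp [adjR] at hA
          · -- parent is a variable
            have hne' : (Sum.inr (Sum.inl j') : RV a b) ≠ vT a b := by simp [vT]
            rw [if_neg hne'] at hgv
            have h2 : 2 ≤ g (Sum.inr (Sum.inl j') : RV a b) := hP.1 j' rfl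
            constructor
            · rw [hgv]; exact seg_add_le (by linarith)
            · intro _; rw [hgv]; exact seg_add_le h2
          · -- parent is t
            simp only [adjR] at hA
            have hk3' : k3' = 2 := by
              rcases hA with ⟨h, -⟩ | ⟨h, -⟩
              · exact absurd h hk3
              · exact h
            subst hk3'
            have ht : (Sum.inr (Sum.inr 2) : RV a b) = vT a b := rfl
            rw [if_pos ht] at hgv
            have hpos0 : posR C (Sum.inr (Sum.inr 2) : RV a b) (Sum.inr (Sum.inr k3)) = 0 := by
              simp [posR]
            have hg0 : g (Sum.inr (Sum.inr 2) : RV a b) = 0 := hgroot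
            rw [hpos0, seg_01, hg0] at hgv
            constructor
            · rw [hgv]; norm_num
            · intro h; exact absurd ht h
        refine ⟨?_, ?_, fun _ => main3.1, fun k3'' _ hv hpt => ?_⟩
        · intro j hj; simp at hj
        · intro i hi; simp at hi
        · have hk : k3'' = k3 := by
            simp only [Sum.inr.injEq] at hv; exact hv.symm
          subst hk
          exact main3.2 hpt


theorem stmt_14
    (a b : ℕ) (C : Fin b → RClause a) (hC : DistinctVars C)
    (parent : RV a b → RV a b) (g : RV a b → ℝ)
    (hroot : parent (vT a b) = vT a b)
    (hadj : ∀ v, v ≠ vT a b → adjR C v (parent v))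
    (hspan : ∀ v, ∃ k, parent^[k] v = vT a b)
    (hgroot : g (vT a b) = 0)
    (hg : ∀ v, v ≠ vT a b → g v =
      seg (posR C (parent v) v)
        (if parent v = vT a b then 1 else posR C (parent v) (parent (parent v)))
        + g (parent v))
    (hWD : ∀ v, 2 + g v ≤ 4) :
    parent (vX a b) = vT a b ∧ parent (vXb a b) = vT a b := by
  have hXneT : (vX a b) ≠ vT a b := by simp [vX, vT]
  have hXbneT : (vXb a b) ≠ vT a b := by simp [vXb, vT]
  have glb := g_lb C parent g hadj hgroot hg
  have gvr : ∀ j : Fin a, 2 ≤ g (Sum.inr (Sum.inl j) : RV a b) := by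
    intro j
    obtain ⟨k, hk⟩ := hspan (Sum.inr (Sum.inl j))
    exact (glb k _ hk).1 j rfl
  have gcl : ∀ i : Fin b, 2 ≤ g (Sum.inl i : RV a b) := by
    intro i
    obtain ⟨k, hk⟩ := hspan (Sum.inl i)
    exact (glb k _ hk).2.1 i rfl
  constructor
  · by_contra hne
    have hA := hadj (vX a b) hXneT
    obtain ⟨j, hw⟩ : ∃ j, parent (vX a b) = Sum.inr (Sum.inl j) := by
      rcases hq : parent (vX a b) with i | j | k3
      · rw [hq] at hA; simp [adjR, vX] at hA
      · exact ⟨j, rfl⟩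
      · rw [hq] at hA
        simp only [adjR, vX] at hA
        have hk3 : k3 = 2 := by
          rcases hA with ⟨h, -⟩ | ⟨h, -⟩
          · exact absurd h (by decide)
          · exact h
        exact absurd (by rw [hq, hk3]; rfl) hne
    have hgx := hg (vX a b) hXneT
    rw [hw, if_neg (by simp [vT])] at hgx
    have hp0 : posR C (Sum.inr (Sum.inl j) : RV a b) (vX a b) = 0 := by simp [posR, vX]
    rw [hp0] at hgx
    have hWDx := hWD (vX a b)
    have hvjneT : (Sum.inr (Sum.inl j) : RV a b) ≠ vT a b := by simp [vT]
    have hA2 := hadj (Sum.inr (Sum.inl j)) hvjneT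
    rcases hq2 : parent (Sum.inr (Sum.inl j) : RV a b) with i | j2 | k3
    · -- parent of the variable is a clause
      rw [hq2] at hA2 hgx
      simp only [adjR] at hA2
      by_cases hop : occursPos j (C i)
      · have hp1 : posR C (Sum.inr (Sum.inl j) : RV a b) (Sum.inl i) = 0 := by
          simp [posR, hop]
        rw [hp1, seg_self] at hgx
        have hgj := hg (Sum.inr (Sum.inl j)) hvjneT
        rw [hq2, if_neg (by simp [vT])] at hgj
        have hclneT : (Sum.inl i : RV a b) ≠ vT a b := by simp [vT]
        have hA3 := hadj (Sum.inl i) hclneT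
        rcases hq3 : parent (Sum.inl i : RV a b) with i2 | j2 | k3
        · rw [hq3] at hA3; simp [adjR] at hA3
        · rw [hq3] at hA3 hgj
          simp only [adjR] at hA3
          by_cases hjj : j2 = j
          · subst hjj
            exact no_two_cycle parent (vT a b) (Sum.inr (Sum.inl j2)) (Sum.inl i)
              hq2 hq3 (hspan _) hvjneT hclneT
          · have hb := seg_clause C i j j2 hA2 hA3 (fun h => hjj h.symm)
            have := gcl i
            linarith
        · rw [hq3] at hA3; simp [adjR] at hA3
      · have hp1 : posR C (Sum.inr (Sum.inl j) : RV a b) (Sum.inl i) = 1 := by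
          simp [posR, hop]
        rw [hp1, seg_01] at hgx
        have := gvr j
        linarith
    · rw [hq2] at hA2; simp [adjR] at hA2
    · rw [hq2] at hA2 hgx
      simp only [adjR] at hA2
      rcases hA2 with rfl | rfl
      · exact no_two_cycle parent (vT a b) (vX a b) (Sum.inr (Sum.inl j))
          hw hq2 (hspan _) hXneT hvjneT
      · have hp1 : posR C (Sum.inr (Sum.inl j) : RV a b) (Sum.inr (Sum.inr 1)) = 1 := by
          simp [posR]
        rw [hp1, seg_01] at hgx
        have := gvr j
        linarith
  · by_contra hne
    have hA := hadj (vXb a b) hXbneT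
    obtain ⟨j, hw⟩ : ∃ j, parent (vXb a b) = Sum.inr (Sum.inl j) := by
      rcases hq : parent (vXb a b) with i | j | k3
      · rw [hq] at hA; simp [adjR, vXb] at hA
      · exact ⟨j, rfl⟩
      · rw [hq] at hA
        simp only [adjR, vXb] at hA
        have hk3 : k3 = 2 := by
          rcases hA with ⟨h, -⟩ | ⟨h, -⟩
          · exact absurd h (by decide)
          · exact h
        exact absurd (by rw [hq, hk3]; rfl) hne
    have hgx := hg (vXb a b) hXbneT
    rw [hw, if_neg (by simp [vT])] at hgx
    have hp0 : posR C (Sum.inr (Sum.inl j) : RV a b) (vXb a b) = 1 := by simp [posR, vXb]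
    rw [hp0] at hgx
    have hWDx := hWD (vXb a b)
    have hvjneT : (Sum.inr (Sum.inl j) : RV a b) ≠ vT a b := by simp [vT]
    have hA2 := hadj (Sum.inr (Sum.inl j)) hvjneT
    rcases hq2 : parent (Sum.inr (Sum.inl j) : RV a b) with i | j2 | k3
    · -- parent of the variable is a clause
      rw [hq2] at hA2 hgx
      simp only [adjR] at hA2
      by_cases hop : occursPos j (C i)
      · have hp1 : posR C (Sum.inr (Sum.inl j) : RV a b) (Sum.inl i) = 0 := by
          simp [posR, hop]
        rw [hp1, seg_10] at hgx
        have := gvr j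
        linarith
      · have hp1 : posR C (Sum.inr (Sum.inl j) : RV a b) (Sum.inl i) = 1 := by
          simp [posR, hop]
        rw [hp1, seg_self] at hgx
        have hgj := hg (Sum.inr (Sum.inl j)) hvjneT
        rw [hq2, if_neg (by simp [vT])] at hgj
        have hclneT : (Sum.inl i : RV a b) ≠ vT a b := by simp [vT]
        have hA3 := hadj (Sum.inl i) hclneT
        rcases hq3 : parent (Sum.inl i : RV a b) with i2 | j2 | k3
        · rw [hq3] at hA3; simp [adjR] at hA3
        · rw [hq3] at hA3 hgj
          simp only [adjR] at hA3
          by_cases hjj : j2 = j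
          · subst hjj
            exact no_two_cycle parent (vT a b) (Sum.inr (Sum.inl j2)) (Sum.inl i)
              hq2 hq3 (hspan _) hvjneT hclneT
          · have hb := seg_clause C i j j2 hA2 hA3 (fun h => hjj h.symm)
            have := gcl i
            linarith
        · rw [hq3] at hA3; simp [adjR] at hA3
    · rw [hq2] at hA2; simp [adjR] at hA2
    · rw [hq2] at hA2 hgx
      simp only [adjR] at hA2
      rcases hA2 with rfl | rfl
      · have hp1 : posR C (Sum.inr (Sum.inl j) : RV a b) (Sum.inr (Sum.inr 0)) = 0 := by
          simp [posR]
        rw [hp1, seg_10] at hgx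
        have := gvr j
        linarith
      · exact no_two_cycle parent (vT a b) (vXb a b) (Sum.inr (Sum.inl j))
          hw hq2 (hspan _) hXbneT hvjneT
end

section
/- Given a satisfying assignment of a 3SAT instance, the corresponding spanning tree in the d-MDT reduction graph (each variable tour attached to x if True and to x̄ if False, each clause tour attached to a variable tour whose literal satisfies it) achieves worst delay exactly 4. -/
theorem stmt_16
    (a b : ℕ) (ha : 0 < a)
    (C : Fin b → RClause a) (hC : DistinctVars C)
    (asg : Fin a → Bool)
    (pick : Fin b → Fin a × Bool)
    (hpickmem : ∀ i, pick i = (C i).1 ∨ pick i = (C i).2.1 ∨ pick i = (C i).2.2)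
    (hpicksat : ∀ i, asg (pick i).1 = (pick i).2)
    (parent : RV a b → RV a b)
    (hpcl : ∀ i : Fin b, parent (cl i) = vr (pick i).1)
    (hpvr : ∀ j : Fin a, parent (vr j) = if asg j then vX a b else vXb a b)
    (hpX : parent (vX a b) = vT a b)
    (hpXb : parent (vXb a b) = vT a b)
    (hpT : parent (vT a b) = vT a b) :
    (∀ v, v ≠ vT a b → adjR C v (parent v)) ∧
    (∀ v, ∃ k, parent^[k] v = vT a b) ∧
    ∃ g : RV a b → ℝ,
      g (vT a b) = 0 ∧
      (∀ v, v ≠ vT a b → g v =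
        seg (posR C (parent v) v)
          (if parent v = vT a b then 1 else posR C (parent v) (parent (parent v)))
          + g (parent v)) ∧
      (∀ v, 2 + g v ≤ 4) ∧
      (∃ v, 2 + g v = 4) := by
  have key : ∀ i, occursPos (pick i).1 (C i) ↔ (pick i).2 = true := by
    intro i
    obtain ⟨h1, h2, h3⟩ := hC i
    constructor
    · rintro (h | h | h) <;> rcases hpickmem i with hp | hp | hp <;>
        [rw [hp, h];
         exact absurd ((show (C i).1.1 = (pick i).1 by rw [h]).trans
           (congrArg Prod.fst hp)) h1;
         exact absurd ((show (C i).1.1 = (pick i).1 by rw [h]).trans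
           (congrArg Prod.fst hp)) h2;
         exact absurd ((show (C i).2.1.1 = (pick i).1 by rw [h]).trans
           (congrArg Prod.fst hp)) h1.symm;
         rw [hp, h];
         exact absurd ((show (C i).2.1.1 = (pick i).1 by rw [h]).trans
           (congrArg Prod.fst hp)) h3;
         exact absurd ((show (C i).2.2.1 = (pick i).1 by rw [h]).trans
           (congrArg Prod.fst hp)) h2.symm;
         exact absurd ((show (C i).2.2.1 = (pick i).1 by rw [h]).trans
           (congrArg Prod.fst hp)) h3.symm;
         rw [hp, h]]
    · intro h
      have hpk : pick i = ((pick i).1, true) := by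
        cases hpp : pick i; simp_all
      rcases hpickmem i with hp | hp | hp <;> rw [hpk] at hp <;>
        simp [occursPos, ← hp]
  have hXne : (vX a b : RV a b) ≠ vT a b := by simp [vX, vT]
  have hXbne : (vXb a b : RV a b) ≠ vT a b := by simp [vXb, vT]
  have hvrne : ∀ j : Fin a, (vr j : RV a b) ≠ vT a b := by simp [vr, vT]
  refine ⟨?_, ?_, ?_⟩
  · rintro (i | j | k) hv
    · rw [show (Sum.inl i : RV a b) = cl i from rfl, hpcl]
      rcases hpickmem i with h | h | h <;> simp [adjR, cl, vr, occursIn, h]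
    · rw [show (Sum.inr (Sum.inl j) : RV a b) = vr j from rfl, hpvr]
      by_cases h : asg j <;> simp [h, adjR, vr, vX, vXb]
    · fin_cases k
      · rw [show (Sum.inr (Sum.inr ⟨0, by omega⟩) : RV a b) = vX a b from rfl, hpX]
        simp [adjR, vX, vT]
      · rw [show (Sum.inr (Sum.inr ⟨1, by omega⟩) : RV a b) = vXb a b from rfl, hpXb]
        simp [adjR, vXb, vT]
      · exact absurd rfl hv
  · rintro (i | j | k)
    · refine ⟨3, ?_⟩
      simp only [Function.iterate_succ, Function.iterate_zero, Function.comp_apply,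
        id_eq]
      rw [show (Sum.inl i : RV a b) = cl i from rfl, hpcl, hpvr]
      by_cases h : asg (pick i).1 <;> simp [h, hpX, hpXb]
    · refine ⟨2, ?_⟩
      simp only [Function.iterate_succ, Function.iterate_zero, Function.comp_apply,
        id_eq]
      rw [show (Sum.inr (Sum.inl j) : RV a b) = vr j from rfl, hpvr]
      by_cases h : asg j <;> simp [h, hpX, hpXb]
    · fin_cases k
      · exact ⟨1, by simpa [vX] using hpX⟩
      · exact ⟨1, by simpa [vXb] using hpXb⟩
      · exact ⟨0, rfl⟩
  · refine ⟨Sum.elim (fun _ => (2:ℝ))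
      (Sum.elim (fun _ => 2) (fun k => if k = 2 then 0 else 1)), ?_, ?_, ?_, ?_⟩
    · simp [vT]
    · rintro (i | j | k) hv
      · -- clause tour
        rw [show (Sum.inl i : RV a b) = cl i from rfl, hpcl, hpvr]
        have hsat := hpicksat i
        by_cases h : asg (pick i).1
      -- satisfied positively
        · have hpos : occursPos (pick i).1 (C i) := (key i).2 (by rw [← hsat, h])
          rw [if_pos h, if_neg (hvrne _)]
          have h1 : posR C (vr (pick i).1) (cl i) = 0 := by
            simp [posR, vr, cl, hpos]
          have h2 : posR C (vr (pick i).1) (vX a b) = 0 := by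
            simp [posR, vr, vX]
          rw [h1, h2, seg_self]
          simp [cl, vr]
        · have hneg : ¬ occursPos (pick i).1 (C i) := by
            rw [key i, ← hsat]; simpa using h
          rw [if_neg h, if_neg (hvrne _)]
          have h1 : posR C (vr (pick i).1) (cl i) = 1 := by
            simp [posR, vr, cl, hneg]
          have h2 : posR C (vr (pick i).1) (vXb a b) = 1 := by
            simp [posR, vr, vXb]
          rw [h1, h2, seg_self]
          simp [cl, vr]
      · -- variable tour
        rw [show (Sum.inr (Sum.inl j) : RV a b) = vr j from rfl, hpvr]
        by_cases h : asg j
        · rw [if_pos h, if_neg hXne, hpX]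
          have h1 : posR C (vX a b) (vr j) = 1 := by simp [posR, vr, vX]
          have h2 : posR C (vX a b) (vT a b) = 0 := by simp [posR, vX, vT]
          rw [h1, h2, seg_10]
          simp [vr, vX, Fin.ext_iff]; norm_num
        · rw [if_neg h, if_neg hXbne, hpXb]
          have h1 : posR C (vXb a b) (vr j) = 1 := by simp [posR, vr, vXb]
          have h2 : posR C (vXb a b) (vT a b) = 0 := by simp [posR, vXb, vT]
          rw [h1, h2, seg_10]
          simp [vr, vXb, Fin.ext_iff]; norm_num
      · fin_cases k
        · rw [show (Sum.inr (Sum.inr ⟨0, by omega⟩) : RV a b) = vX a b from rfl,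
            hpX, if_pos rfl]
          have h1 : posR C (vT a b) (vX a b) = 0 := by simp [posR, vX, vT]
          rw [h1, seg_01]
          simp [vX, vT]
        · rw [show (Sum.inr (Sum.inr ⟨1, by omega⟩) : RV a b) = vXb a b from rfl,
            hpXb, if_pos rfl]
          have h1 : posR C (vT a b) (vXb a b) = 0 := by simp [posR, vXb, vT]
          rw [h1, seg_01]
          simp [vXb, vT]
        · exact absurd rfl hv
    · rintro (i | j | k)
      · norm_num
      · norm_num
      · fin_cases k <;> simp <;> norm_num [Fin.ext_iff]
    · exact ⟨vr ⟨0, ha⟩, by norm_num [vr]⟩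
end

section
/- In Algorithm MDTD-CG, the quantity max over tours v of (len_v + l_v), where len_v is the length of the shortest path in the converted graph G' from the best meeting point of tour v to the base-station vertex and l_v is the tour length, is a lower bound on the optimal worst delay of any spanning tree with any directions. -/
/-- Travel time (at unit speed) from point `p` to point `q` on a closed tour of
length `l`, moving in direction `d` (`true` = counterclockwise, `false` = clockwise). -/
noncomputable def timeOn (l p q : ℝ) (d : Bool) : ℝ :=
  if d then l * Int.fract ((q - p) / l) else l * Int.fract ((p - q) / l)

/-!
STATEMENT 17: In Algorithm MDTD-CG, the quantity max over tours v of (len_v + l_v),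
where len_v is the length of the shortest path in the converted graph G' from the
best meeting point of tour v to the base-station vertex and l_v is the tour length,
is a lower bound on the optimal worst delay of any spanning tree with any directions.

Model: the tour graph has tours `Fin n` with lengths `tl`, symmetric adjacency `adj`,
meeting-point coordinates `pos v w` (the point on tour `v` where it meets tour `w`),
base-station tour `root` with base station at coordinate `bs`.  `δ v w` is the
shortest-path distance in the converted graph G' from the meeting point [v, w] to the
base-station vertex; it is symmetric, nonnegative, and satisfies the characteristic
inequalities of G'-distances: the triangle inequality along any tour segment between
two meeting points of the same tour (in either direction, since G'-edge weights are
the shorter arcs), and the bound via the segment to the base station on the root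
tour.  `lenv v` is the minimum of `δ v w` over the meeting points of tour `v`
(`lenv root = 0` since the base-station vertex itself lies on the root tour).
For any spanning tree `parent` with directions `dir` and induced downstream delays
`g`, the worst delay `⨆ u, (tl u + g u)` is at least `lenv v + tl v` for every `v`.
-/
theorem stmt_17
    (n : ℕ) (tl : Fin n → ℝ) (htl : ∀ v, 0 < tl v)
    (adj : Fin n → Fin n → Prop) (hadjsymm : ∀ v w, adj v w → adj w v)
    (pos : Fin n → Fin n → ℝ) (root : Fin n) (bs : ℝ)
    (δ : Fin n → Fin n → ℝ)
    (hδsymm : ∀ v w, δ v w = δ w v)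
    (hδnn : ∀ v w, 0 ≤ δ v w)
    (hbs : ∀ w (d : Bool), adj root w → δ root w ≤ timeOn (tl root) (pos root w) bs d)
    (htri : ∀ u v w (d : Bool), adj u v → adj u w →
      δ u v ≤ timeOn (tl u) (pos u v) (pos u w) d + δ u w)
    (lenv : Fin n → ℝ)
    (hlenv : ∀ v w, adj v w → lenv v ≤ δ v w)
    (hlenvroot : lenv root = 0)
    (parent : Fin n → Fin n) (dir : Fin n → Bool) (g : Fin n → ℝ)
    (hptroot : parent root = root)
    (hptadj : ∀ v, v ≠ root → adj v (parent v))
    (hspan : ∀ v, ∃ k, parent^[k] v = root)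
    (hgroot : g root = 0)
    (hg : ∀ v, v ≠ root → g v =
      timeOn (tl (parent v)) (pos (parent v) v)
        (if parent v = root then bs else pos (parent v) (parent (parent v)))
        (dir (parent v)) + g (parent v)) :
    ∀ v, lenv v + tl v ≤ ⨆ u, (tl u + g u) := by
  -- Key: δ v (parent v) ≤ g v for v ≠ root, by induction on tree depth.
  have key : ∀ k v, parent^[k] v = root → v ≠ root → δ v (parent v) ≤ g v := by
    intro k
    induction k with
    | zero => intro v hv hne; exact absurd hv hne
    | succ k ih =>
      intro v hv hne
      rw [Function.iterate_succ_apply] at hv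
      have hadjv : adj v (parent v) := hptadj v hne
      have hgv := hg v hne
      by_cases hp : parent v = root
      · rw [hgv, hp, if_pos rfl, hgroot, hδsymm]
        have := hbs v (dir root) (hadjsymm v root (hp ▸ hadjv))
        linarith
      · have ihp := ih (parent v) hv hp
        have htr := htri (parent v) v (parent (parent v)) (dir (parent v))
          (hadjsymm v (parent v) hadjv) (hptadj (parent v) hp)
        rw [hgv, if_neg hp, hδsymm]
        linarith
  have hle : ∀ v, lenv v ≤ g v := by
    intro v
    by_cases hv : v = root
    · rw [hv, hlenvroot, hgroot]
    · obtain ⟨k, hk⟩ := hspan v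
      exact le_trans (hlenv v (parent v) (hptadj v hv)) (key k v hk hv)
  intro v
  have : tl v + g v ≤ ⨆ u, (tl u + g u) :=
    le_ciSup (f := fun u => tl u + g u) (Set.Finite.bddAbove (Set.finite_range _)) v
  have := hle v
  linarith
end
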